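/- Let u = (u₁,u₂) and v = (v₁,v₂) be integer points with |v₁ - u₁| = 1 (horizontal distance exactly 1), and let w be an integer point not equal to u or v. If moreover w does not lie strictly inside the open horizontal strip {p : min(u₂,v₂) < p₂ < max(u₂,v₂)} intersected with the vertical strip {p : min(u₁,v₁) ≤ p₁ ≤ max(u₁,v₁)}, then the distance from w to the segment [u,v] is at least 1/2. -/
import Mathlib


/-- A point of the Euclidean plane with the given coordinates. -/
noncomputable def pt (a b : ℝ) : EuclideanSpace ℝ (Fin 2) :=
  (WithLp.equiv 2 (Fin 2 → ℝ)).symm ![a, b]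

lemma pt_comb (s t a b c d : ℝ) : s • pt a b + t • pt c d = pt (s*a+t*c) (s*b+t*d) := by
  ext i; fin_cases i <;> simp [pt]

lemma dist_pt (a b c d : ℝ) : dist (pt a b) (pt c d) = Real.sqrt ((a-c)^2 + (b-d)^2) := by
  rw [EuclideanSpace.dist_eq]
  simp [pt, Fin.sum_univ_two, Real.dist_eq, sq_abs]

lemma key_ineq (a b c d x y : ℝ) (hca : (c - a)^2 = 1)
    (hcases : ((x ≤ a - 1 ∧ x ≤ c - 1) ∨ (a + 1 ≤ x ∧ c + 1 ≤ x)) ∨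
      ((y ≤ b - 1 ∧ y ≤ d - 1) ∨ (b + 1 ≤ y ∧ d + 1 ≤ y)) ∨
      ((x = c ∧ y = b ∧ 1 ≤ (d - b)^2) ∨ (x = a ∧ y = d ∧ 1 ≤ (d - b)^2))) :
    ∀ t : ℝ, 0 ≤ t → t ≤ 1 →
      (1:ℝ)/4 ≤ (x - ((1-t)*a + t*c))^2 + (y - ((1-t)*b + t*d))^2 := by
  intro t ht ht1
  rcases hcases with (⟨hA, hB⟩ | ⟨hA, hB⟩) | (⟨hA, hB⟩ | ⟨hA, hB⟩) | ⟨hA, hB, hC⟩ | ⟨hA, hB, hC⟩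
  · have hq : (1:ℝ) ≤ ((1-t)*a + t*c) - x := by nlinarith
    nlinarith [sq_nonneg (y - ((1-t)*b + t*d)), hq]
  · have hq : (1:ℝ) ≤ x - ((1-t)*a + t*c) := by nlinarith
    nlinarith [sq_nonneg (y - ((1-t)*b + t*d)), hq]
  · have hq : (1:ℝ) ≤ ((1-t)*b + t*d) - y := by nlinarith
    nlinarith [sq_nonneg (x - ((1-t)*a + t*c)), hq]
  · have hq : (1:ℝ) ≤ y - ((1-t)*b + t*d) := by nlinarith
    nlinarith [sq_nonneg (x - ((1-t)*a + t*c)), hq]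
  · rw [hA, hB]
    nlinarith [sq_nonneg (1 - 2*t),
      mul_nonneg (sq_nonneg t) (by linarith : (0:ℝ) ≤ (d-b)^2 - 1), hca]
  · rw [hA, hB]
    nlinarith [sq_nonneg (1 - 2*t),
      mul_nonneg (sq_nonneg (1-t)) (by linarith : (0:ℝ) ≤ (d-b)^2 - 1), hca]

/-- Let `u`, `v` be integer points at horizontal distance exactly `1`, and let
`w` be an integer point distinct from `u` and `v`. If `w` does not lie in the
open horizontal strip strictly between the `y`-coordinates of `u` and `v`
intersected with the closed vertical strip between their `x`-coordinates,
then the distance from `w` to the segment `[u,v]` is at least `1/2`. -/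
theorem dist_to_unit_width_segment (u v w : ℤ × ℤ)
    (hhoriz : |v.1 - u.1| = 1)
    (hwu : w ≠ u) (hwv : w ≠ v)
    (hstrip : ¬ (min u.2 v.2 < w.2 ∧ w.2 < max u.2 v.2 ∧
                 min u.1 v.1 ≤ w.1 ∧ w.1 ≤ max u.1 v.1)) :
    (1 : ℝ) / 2 ≤
      Metric.infDist (pt w.1 w.2) (segment ℝ (pt u.1 u.2) (pt v.1 v.2)) := by
  have h1 : v.1 = u.1 + 1 ∨ v.1 = u.1 - 1 := by
    rcases (abs_eq (by norm_num : (0:ℤ) ≤ 1)).mp hhoriz with h | h <;> omega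
  have h2 : w.1 ≠ u.1 ∨ w.2 ≠ u.2 := by
    by_contra h; push_neg at h; exact hwu (Prod.ext h.1 h.2)
  have h3 : w.1 ≠ v.1 ∨ w.2 ≠ v.2 := by
    by_contra h; push_neg at h; exact hwv (Prod.ext h.1 h.2)
  have hcases :
      ((w.1 ≤ u.1 - 1 ∧ w.1 ≤ v.1 - 1) ∨ (u.1 + 1 ≤ w.1 ∧ v.1 + 1 ≤ w.1)) ∨
      ((w.2 ≤ u.2 - 1 ∧ w.2 ≤ v.2 - 1) ∨ (u.2 + 1 ≤ w.2 ∧ v.2 + 1 ≤ w.2)) ∨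
      ((w.1 = v.1 ∧ w.2 = u.2 ∧ u.2 ≠ v.2) ∨ (w.1 = u.1 ∧ w.2 = v.2 ∧ u.2 ≠ v.2)) := by
    omega
  have hd2 : u.2 ≠ v.2 → (1:ℝ) ≤ ((v.2:ℝ) - (u.2:ℝ))^2 := by
    intro h
    have h0 : 1 ≤ (v.2 - u.2)^2 := by
      nlinarith [Int.one_le_abs (show v.2 - u.2 ≠ 0 by omega), abs_nonneg (v.2 - u.2),
        sq_abs (v.2 - u.2)]
    exact_mod_cast h0
  have hca : ((v.1:ℝ) - (u.1:ℝ))^2 = 1 := by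
    have h0 : (v.1 - u.1)^2 = 1 := by rcases h1 with h | h <;> rw [h] <;> ring
    exact_mod_cast h0
  have hcR : (((w.1:ℝ) ≤ (u.1:ℝ) - 1 ∧ (w.1:ℝ) ≤ (v.1:ℝ) - 1) ∨
        ((u.1:ℝ) + 1 ≤ (w.1:ℝ) ∧ (v.1:ℝ) + 1 ≤ (w.1:ℝ))) ∨
      (((w.2:ℝ) ≤ (u.2:ℝ) - 1 ∧ (w.2:ℝ) ≤ (v.2:ℝ) - 1) ∨
        ((u.2:ℝ) + 1 ≤ (w.2:ℝ) ∧ (v.2:ℝ) + 1 ≤ (w.2:ℝ))) ∨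
      (((w.1:ℝ) = (v.1:ℝ) ∧ (w.2:ℝ) = (u.2:ℝ) ∧ 1 ≤ ((v.2:ℝ) - (u.2:ℝ))^2) ∨
        ((w.1:ℝ) = (u.1:ℝ) ∧ (w.2:ℝ) = (v.2:ℝ) ∧ 1 ≤ ((v.2:ℝ) - (u.2:ℝ))^2)) := by
    rcases hcases with (⟨hA, hB⟩ | ⟨hA, hB⟩) | (⟨hA, hB⟩ | ⟨hA, hB⟩) | ⟨hA, hB, hC⟩ | ⟨hA, hB, hC⟩
    · exact Or.inl (Or.inl ⟨by exact_mod_cast hA, by exact_mod_cast hB⟩)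
    · exact Or.inl (Or.inr ⟨by exact_mod_cast hA, by exact_mod_cast hB⟩)
    · exact Or.inr (Or.inl (Or.inl ⟨by exact_mod_cast hA, by exact_mod_cast hB⟩))
    · exact Or.inr (Or.inl (Or.inr ⟨by exact_mod_cast hA, by exact_mod_cast hB⟩))
    · exact Or.inr (Or.inr (Or.inl ⟨by exact_mod_cast hA, by exact_mod_cast hB, hd2 hC⟩))
    · exact Or.inr (Or.inr (Or.inr ⟨by exact_mod_cast hA, by exact_mod_cast hB, hd2 hC⟩))
  have key := key_ineq (u.1:ℝ) (u.2:ℝ) (v.1:ℝ) (v.2:ℝ) (w.1:ℝ) (w.2:ℝ) hca hcR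
  have hne : (segment ℝ (pt (u.1:ℝ) (u.2:ℝ)) (pt (v.1:ℝ) (v.2:ℝ))).Nonempty :=
    ⟨_, left_mem_segment ℝ _ _⟩
  by_contra hlt
  push_neg at hlt
  rw [Metric.infDist_lt_iff hne] at hlt
  obtain ⟨q, hq, hdq⟩ := hlt
  obtain ⟨s, t, hs, ht, hst, rfl⟩ := hq
  rw [pt_comb, dist_pt] at hdq
  have hs1 : s = 1 - t := by linarith
  subst hs1
  have hk := key t ht (by linarith)
  have h4 : (1:ℝ)/2 ≤ Real.sqrt (((w.1:ℝ) - ((1-t)*(u.1:ℝ) + t*(v.1:ℝ)))^2 +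
      ((w.2:ℝ) - ((1-t)*(u.2:ℝ) + t*(v.2:ℝ)))^2) := by
    rw [show (1:ℝ)/2 = Real.sqrt (1/4) by
      rw [show (1:ℝ)/4 = (1/2)^2 by norm_num, Real.sqrt_sq]; norm_num]
    exact Real.sqrt_le_sqrt hk
  have : Real.sqrt (((w.1:ℝ) - ((1-t)*(u.1:ℝ) + t*(v.1:ℝ)))^2 +
      ((w.2:ℝ) - ((1-t)*(u.2:ℝ) + t*(v.2:ℝ)))^2) < 1/2 := by
    convert hdq using 3
  linarith
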